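/- For every matrix X in the group G generated by M₁ = (1/2)·[[1,−1,1,1],[−1,−1,−1,1],[1,1,−1,1],[1,−1,−1,−1]] and M₂ = (1/2)·[[−1,1,−1,−1],[1,−1,−1,−1],[−1,−1,1,−1],[1,1,1,−1]], the inequality Tr(XA) ≤ 1 holds, where A is the 4×4 matrix with A₄₁ = 1, A₄₄ = −1, and all other entries 0. -/

import Mathlib

/-- Entry predicate: value is in {0, 1/2, -1/2, 1, -1}. -/
def Ent (q : ℚ) : Prop := q = 0 ∨ q = 1/2 ∨ q = -1/2 ∨ q = 1 ∨ q = -1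

set_option maxHeartbeats 1600000 in
/-- Structure of unit vectors with entries in `Ent`. -/
lemma unit_struct (a : Fin 4 → ℚ) (hE : ∀ i, Ent (a i))
    (h : a 0 ^ 2 + a 1 ^ 2 + a 2 ^ 2 + a 3 ^ 2 = 1) :
    (∀ i, a i = 1/2 ∨ a i = -1/2) ∨
    (∃ i, (a i = 1 ∨ a i = -1) ∧ ∀ j, j ≠ i → a j = 0) := by
  have h0 := hE 0; have h1 := hE 1; have h2 := hE 2; have h3 := hE 3
  rcases h0 with h0|h0|h0|h0|h0 <;> rcases h1 with h1|h1|h1|h1|h1 <;>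
    rcases h2 with h2|h2|h2|h2|h2 <;> rcases h3 with h3|h3|h3|h3|h3 <;>
    first
    | (rw [h0, h1, h2, h3] at h; exfalso; revert h; norm_num; done)
    | (left; intro i; fin_cases i <;> simp [h0, h1, h2, h3]; done)
    | (right; refine ⟨0, ?_, ?_⟩ <;>
        first
        | (norm_num [h0]; done)
        | (intro j hj; fin_cases j <;> simp_all; done))
    | (right; refine ⟨1, ?_, ?_⟩ <;>
        first
        | (norm_num [h1]; done)
        | (intro j hj; fin_cases j <;> simp_all; done))
    | (right; refine ⟨2, ?_, ?_⟩ <;>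
        first
        | (norm_num [h2]; done)
        | (intro j hj; fin_cases j <;> simp_all; done))
    | (right; refine ⟨3, ?_, ?_⟩ <;>
        first
        | (norm_num [h3]; done)
        | (intro j hj; fin_cases j <;> simp_all; done))

lemma dot_mem (a b : Fin 4 → ℚ) (hEa : ∀ i, Ent (a i)) (hEb : ∀ i, Ent (b i))
    (ha : a 0 ^ 2 + a 1 ^ 2 + a 2 ^ 2 + a 3 ^ 2 = 1)
    (hb : b 0 ^ 2 + b 1 ^ 2 + b 2 ^ 2 + b 3 ^ 2 = 1) :
    Ent (a 0 * b 0 + a 1 * b 1 + a 2 * b 2 + a 3 * b 3) := by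
  rcases unit_struct a hEa ha with hha | ⟨i, hi, hz⟩
  · rcases unit_struct b hEb hb with hhb | ⟨i, hi, hz⟩
    · -- both half vectors
      have p0 : a 0 * b 0 = 1/4 ∨ a 0 * b 0 = -(1/4) := by
        rcases hha 0 with h|h <;> rcases hhb 0 with h'|h' <;> rw [h, h'] <;> norm_num
      have p1 : a 1 * b 1 = 1/4 ∨ a 1 * b 1 = -(1/4) := by
        rcases hha 1 with h|h <;> rcases hhb 1 with h'|h' <;> rw [h, h'] <;> norm_num
      have p2 : a 2 * b 2 = 1/4 ∨ a 2 * b 2 = -(1/4) := by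
        rcases hha 2 with h|h <;> rcases hhb 2 with h'|h' <;> rw [h, h'] <;> norm_num
      have p3 : a 3 * b 3 = 1/4 ∨ a 3 * b 3 = -(1/4) := by
        rcases hha 3 with h|h <;> rcases hhb 3 with h'|h' <;> rw [h, h'] <;> norm_num
      rcases p0 with p0|p0 <;> rcases p1 with p1|p1 <;> rcases p2 with p2|p2 <;>
        rcases p3 with p3|p3 <;> rw [p0, p1, p2, p3] <;> norm_num [Ent]
    · -- b is ± a standard basis vector
      have key : a 0 * b 0 + a 1 * b 1 + a 2 * b 2 + a 3 * b 3 = a i * b i := by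
        fin_cases i
        · rw [hz 1 (by decide), hz 2 (by decide), hz 3 (by decide)]; ring_nf; rfl
        · rw [hz 0 (by decide), hz 2 (by decide), hz 3 (by decide)]; ring_nf; rfl
        · rw [hz 0 (by decide), hz 1 (by decide), hz 3 (by decide)]; ring_nf; rfl
        · rw [hz 0 (by decide), hz 1 (by decide), hz 2 (by decide)]; ring_nf; rfl
      rw [key]
      rcases hi with hi|hi <;> rcases hEa i with h|h|h|h|h <;> rw [hi, h] <;>
        norm_num [Ent]
  · -- a is ± a standard basis vector
    have key : a 0 * b 0 + a 1 * b 1 + a 2 * b 2 + a 3 * b 3 = a i * b i := by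
      fin_cases i
      · rw [hz 1 (by decide), hz 2 (by decide), hz 3 (by decide)]; ring_nf; rfl
      · rw [hz 0 (by decide), hz 2 (by decide), hz 3 (by decide)]; ring_nf; rfl
      · rw [hz 0 (by decide), hz 1 (by decide), hz 3 (by decide)]; ring_nf; rfl
      · rw [hz 0 (by decide), hz 1 (by decide), hz 2 (by decide)]; ring_nf; rfl
    rw [key]
    rcases hi with hi|hi <;> rcases hEb i with h|h|h|h|h <;> rw [hi, h] <;>
      norm_num [Ent]

/-- Invariant predicate on matrices. -/
def Good (M : Matrix (Fin 4) (Fin 4) ℚ) : Prop :=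
  M.transpose * M = 1 ∧ ∀ i j, Ent (M i j)

lemma good_one : Good (1 : Matrix (Fin 4) (Fin 4) ℚ) := by
  constructor
  · simp
  · intro i j
    by_cases h : i = j <;> simp [Matrix.one_apply, h, Ent]

lemma good_mul {M N : Matrix (Fin 4) (Fin 4) ℚ} (hM : Good M) (hN : Good N) :
    Good (M * N) := by
  obtain ⟨hM1, hM2⟩ := hM
  obtain ⟨hN1, hN2⟩ := hN
  have hM1' : M * M.transpose = 1 := mul_eq_one_comm.mp hM1
  constructor
  · rw [Matrix.transpose_mul, Matrix.mul_assoc, ← Matrix.mul_assoc M.transpose,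
      hM1, Matrix.one_mul, hN1]
  · intro i j
    have hrow : M i 0 ^ 2 + M i 1 ^ 2 + M i 2 ^ 2 + M i 3 ^ 2 = 1 := by
      have := congrFun (congrFun hM1' i) i
      simpa [Matrix.mul_apply, Matrix.transpose_apply, Fin.sum_univ_four,
        Matrix.one_apply, sq] using this
    have hcol : N 0 j ^ 2 + N 1 j ^ 2 + N 2 j ^ 2 + N 3 j ^ 2 = 1 := by
      have := congrFun (congrFun hN1 j) j
      simpa [Matrix.mul_apply, Matrix.transpose_apply, Fin.sum_univ_four,
        Matrix.one_apply, sq] using this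
    have := dot_mem (fun k => M i k) (fun k => N k j)
      (fun k => hM2 i k) (fun k => hN2 k j) hrow hcol
    simpa [Matrix.mul_apply, Fin.sum_univ_four] using this

lemma good_transpose {M : Matrix (Fin 4) (Fin 4) ℚ} (hM : Good M) :
    Good M.transpose := by
  obtain ⟨hM1, hM2⟩ := hM
  refine ⟨?_, fun i j => hM2 j i⟩
  rw [Matrix.transpose_transpose]
  exact mul_eq_one_comm.mp hM1

theorem stmt_6 (u₁ u₂ : GL (Fin 4) ℚ)
    (h₁ : (u₁ : Matrix (Fin 4) (Fin 4) ℚ) =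
      (1 / 2 : ℚ) • !![1, -1, 1, 1; -1, -1, -1, 1; 1, 1, -1, 1; 1, -1, -1, -1])
    (h₂ : (u₂ : Matrix (Fin 4) (Fin 4) ℚ) =
      (1 / 2 : ℚ) • !![-1, 1, -1, -1; 1, -1, -1, -1; -1, -1, 1, -1; 1, 1, 1, -1])
    (X : GL (Fin 4) ℚ) (hX : X ∈ Subgroup.closure {u₁, u₂}) :
    Matrix.trace ((X : Matrix (Fin 4) (Fin 4) ℚ) *
      !![0, 0, 0, 0; 0, 0, 0, 0; 0, 0, 0, 0; 1, 0, 0, -1]) ≤ 1 := by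
  -- Step 1: every element of the closure is Good
  have key : Good (X : Matrix (Fin 4) (Fin 4) ℚ) := by
    induction hX using Subgroup.closure_induction with
    | mem g hg =>
      rcases hg with hg | hg
      · subst hg
        constructor
        · rw [h₁]
          ext i j
          simp only [Matrix.mul_apply, Matrix.transpose_apply]
          rw [Fin.sum_univ_four]
          fin_cases i <;> fin_cases j <;>
            norm_num [Matrix.one_apply, Matrix.smul_apply, smul_eq_mul,
              Matrix.vecHead, Matrix.vecTail, Function.comp,
              Matrix.cons_val_succ, Fin.ext_iff, Matrix.cons_val_two, Matrix.cons_val_three]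
        · intro i j
          rw [h₁]
          fin_cases i <;> fin_cases j <;>
            norm_num [Ent, Matrix.smul_apply, smul_eq_mul, Matrix.vecHead,
              Matrix.vecTail, Function.comp, Matrix.cons_val_succ]
      · rw [Set.mem_singleton_iff] at hg
        subst hg
        constructor
        · rw [h₂]
          ext i j
          simp only [Matrix.mul_apply, Matrix.transpose_apply]
          rw [Fin.sum_univ_four]
          fin_cases i <;> fin_cases j <;>
            norm_num [Matrix.one_apply, Matrix.smul_apply, smul_eq_mul,
              Matrix.vecHead, Matrix.vecTail, Function.comp,
              Matrix.cons_val_succ, Fin.ext_iff, Matrix.cons_val_two, Matrix.cons_val_three]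
        · intro i j
          rw [h₂]
          fin_cases i <;> fin_cases j <;>
            norm_num [Ent, Matrix.smul_apply, smul_eq_mul, Matrix.vecHead,
              Matrix.vecTail, Function.comp, Matrix.cons_val_succ]
    | one => simpa using good_one
    | mul x y _ _ hx hy => simpa using good_mul hx hy
    | inv x _ hx =>
      have hinv : ((x⁻¹ : GL (Fin 4) ℚ) : Matrix (Fin 4) (Fin 4) ℚ) =
          (x : Matrix (Fin 4) (Fin 4) ℚ).transpose := by
        have h1 : (x : Matrix (Fin 4) (Fin 4) ℚ).transpose *
            (x : Matrix (Fin 4) (Fin 4) ℚ) = 1 := hx.1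
        have := Matrix.coe_units_inv x
        rw [this]
        exact Matrix.inv_eq_left_inv h1
      rw [hinv]
      exact good_transpose hx
  obtain ⟨horth, hE⟩ := key
  set M := (X : Matrix (Fin 4) (Fin 4) ℚ) with hMdef
  -- Step 2: compute the trace
  have htr : Matrix.trace (M * !![0, 0, 0, 0; 0, 0, 0, 0; 0, 0, 0, 0; 1, 0, 0, -1])
      = M 0 3 - M 3 3 := by
    simp [Matrix.trace, Matrix.diag, Matrix.mul_apply, Fin.sum_univ_four]
    ring
  rw [htr]
  -- Step 3: column 3 has unit norm
  have hcol : M 0 3 ^ 2 + M 1 3 ^ 2 + M 2 3 ^ 2 + M 3 3 ^ 2 = 1 := by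
    have := congrFun (congrFun horth 3) 3
    simpa [Matrix.mul_apply, Matrix.transpose_apply, Fin.sum_univ_four,
      Matrix.one_apply, sq] using this
  have hs1 : (0:ℚ) ≤ M 1 3 ^ 2 := sq_nonneg _
  have hs2 : (0:ℚ) ≤ M 2 3 ^ 2 := sq_nonneg _
  rcases hE 0 3 with h|h|h|h|h <;> rcases hE 3 3 with h'|h'|h'|h'|h' <;>
    rw [h, h'] <;> first
    | (norm_num; done)
    | (exfalso; rw [h, h'] at hcol; norm_num at hcol; linarith)
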